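/- Let k be a natural number, let I be a set, U an ultrafilter on I, and ⟨n_i : i ∈ I⟩ a family of finite nonempty sets such that the ultraproduct A = ∏_{i∈I} n_i / U is infinite. Let C be the ultratopology on ᵏA induced by any k-dimensional choice function on A. Then the density of C is strictly smaller than |A|; that is, there exists a subset D ⊆ ᵏA which is dense in C and satisfies |D| < |A|. -/

import Mathlib

/-!
If the chosen representatives of the points of `E` take, at `U`-almost every coordinate `i`,
every value in the finite set `ᵏnᵢ`, then `T(E, a) ∈ U` for every `a`, so `E` is dense.
Such an `E` of size `< |A|` exists. Otherwise, well-order the ultraproduct `∏ ᵏnᵢ / U ≃ ᵏA` in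
type `|A|` and choose by recursion functions `F x` that at each coordinate avoid the values of all
earlier `⟦F y⟧` whenever these do not yet exhaust `ᵏnᵢ`. This yields `U`-large sets `Y a`, one
for each point `a`, such that every coordinate `i` lies in fewer than `|ᵏnᵢ|` of them. A function
that at each `i` avoids the values of the representatives of all `a` with `i ∈ Y a` then differs
modulo `U` from every point, which is absurd.
-/

open Set

/-- The setoid on the product `∀ i, A i` identifying functions that agree on a set
in the ultrafilter `U`; its quotient is the ultraproduct `∏ A i / U`. -/
def upSetoid {I : Type*} (U : Ultrafilter I) (A : I → Type*) : Setoid (∀ i, A i) where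
  r f g := {i | f i = g i} ∈ U
  iseqv := by
    refine ⟨fun f => ?_, fun {f g} h => ?_, fun {f g h} hfg hgh => ?_⟩
    · exact Filter.univ_mem' fun i => rfl
    · exact Filter.mem_of_superset h fun i hi => (hi : f i = g i).symm
    · exact Filter.mem_of_superset (Filter.inter_mem hfg hgh) fun i hi =>
        (hi.1 : f i = g i).trans hi.2

/-- Given a "hat" map `c` assigning to each point of `Y` a representative
in `∀ i, X i`, the set `T(R, a) = { i ∈ I : ∃ b ∈ R, b̂(i) = â(i) }`. -/
def tset {I : Type*} {X : I → Type*} {Y : Type*} (c : Y → ∀ i, X i)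
    (R : Set Y) (a : Y) : Set I :=
  {i | ∃ b ∈ R, c b i = c a i}

/-- The ultratopology induced by the hat map `c`: closed sets are exactly the
`R` such that `T(R,a) ∈ U` implies `a ∈ R`. -/
def ultraTop {I : Type*} (U : Ultrafilter I) {X : I → Type*} {Y : Type*}
    (c : Y → ∀ i, X i) : TopologicalSpace Y :=
  TopologicalSpace.ofClosed {R | ∀ a, tset c R a ∈ U → a ∈ R}
    (by
      intro a ha
      have h : tset c (∅ : Set Y) a = ∅ := by ext i; simp [tset]
      rw [h] at ha
      exact absurd ha (Filter.empty_notMem _))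
    (by
      intro S hS a ha
      exact Set.mem_sInter.2 fun R hR => hS hR a
        (Filter.mem_of_superset ha fun i hi => by
          obtain ⟨b, hb, he⟩ := hi
          exact ⟨b, hb R hR, he⟩))
    (by
      intro R hR S hS a ha
      have h : tset c (R ∪ S) a = tset c R a ∪ tset c S a := by
        ext i; simp [tset, Set.mem_union, or_and_right, exists_or]
      rw [h] at ha
      rcases (Ultrafilter.union_mem_iff.1 ha) with h' | h'
      · exact Or.inl (hR a h')
      · exact Or.inr (hS a h'))

open Cardinal Function Topology

universe u v w

theorem ENat.card_lt_card_of_injective_of_notMem {α β : Type*} [Finite β] {f : α → β}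
    (hf : Injective f) {b : β} (hb : b ∉ range f) : ENat.card α < ENat.card β := by
  have := Finite.of_injective f hf
  have := Fintype.ofFinite α
  have := Fintype.ofFinite β
  simpa using Fintype.card_lt_of_injective_of_notMem f hf hb

theorem ENat.card_le_card_of_surjective {α β : Type*} {f : α → β} (hf : Surjective f) :
    ENat.card β ≤ ENat.card α :=
  ENat.card_le_card_of_injective (injective_surjInv hf)

section UltraTopology

variable {I : Type u} {U : Ultrafilter I} {X : I → Type v} {Y : Type w}

theorem isClosed_ultraTop_iff {c : Y → ∀ i, X i} {R : Set Y} :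
    IsClosed[ultraTop U c] R ↔ ∀ a, tset c R a ∈ U → a ∈ R := by
  rw [← @isOpen_compl_iff _ _ (ultraTop U c)]
  change Rᶜᶜ ∈ _ ↔ _
  rw [compl_compl]
  rfl

theorem dense_ultraTop_of_surjective_mem {c : Y → ∀ i, X i} {E : Set Y}
    (hE : {i | Surjective fun b : E => c b i} ∈ U) : @Dense _ (ultraTop U c) E := by
  let _ : TopologicalSpace Y := ultraTop U c
  refine dense_iff_closure_eq.2 <| eq_univ_of_forall fun a =>
    isClosed_ultraTop_iff.1 isClosed_closure a <| Filter.mem_of_superset hE fun i hi => ?_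
  obtain ⟨⟨b, hb⟩, hba⟩ := hi (c a i)
  exact ⟨b, subset_closure hb, hba⟩

end UltraTopology

section Ultraproduct

variable {I : Type u} {U : Ultrafilter I} {S : I → Type v}

theorem upSetoid_mk_eq_mk_iff {f g : ∀ i, S i} :
    Quotient.mk (upSetoid U S) f = Quotient.mk (upSetoid U S) g ↔ {i | f i = g i} ∈ U :=
  Quotient.eq

def IsThinFor (S : I → Type v) {J : Type w} (Y : J → Set I) : Prop :=
  ∀ i, ENat.card {j // i ∈ Y j} < ENat.card (S i)

theorem IsThinFor.exists_notMem {c : Quotient (upSetoid U S) → ∀ i, S i}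
    (hc : ∀ a, Quotient.mk (upSetoid U S) (c a) = a) {Y : Quotient (upSetoid U S) → Set I}
    (hY : IsThinFor S Y) : ∃ a, Y a ∉ U := by
  have avoid : ∀ i, ∃ v, ∀ a, i ∈ Y a → c a i ≠ v := fun i => by
    by_contra! h
    choose a ha hav using h
    exact (hY i).not_ge <| ENat.card_le_card_of_surjective
      (f := fun a : {a // i ∈ Y a} => c a i) fun v => ⟨⟨a v, ha v⟩, hav v⟩
  choose h hh using avoid
  refine ⟨Quotient.mk _ h, fun hYh => ?_⟩
  obtain ⟨i, hi, hch⟩ :=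
    Ultrafilter.nonempty_of_mem (Filter.inter_mem hYh (upSetoid_mk_eq_mk_iff.1 (hc _)))
  exact hh i _ hi hch

theorem exists_isThinFor_of_forall_not_surjective [∀ i, Finite (S i)]
    [Infinite (Quotient (upSetoid U S))] {c : Quotient (upSetoid U S) → ∀ i, S i}
    (hc : ∀ a, Quotient.mk (upSetoid U S) (c a) = a)
    (hsmall : ∀ E : Set (Quotient (upSetoid U S)), #E < #(Quotient (upSetoid U S)) →
      {i | ¬Surjective fun b : E => c b i} ∈ U) :
    ∃ Y : Quotient (upSetoid U S) → Set I, (∀ a, Y a ∈ U) ∧ IsThinFor S Y := by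
  obtain ⟨r, _, hr⟩ := exists_ord_eq (Quotient (upSetoid U S))
  obtain ⟨a₀⟩ : Nonempty (Quotient (upSetoid U S)) := inferInstance
  have : ∀ i, Nonempty (S i) := fun i => ⟨c a₀ i⟩
  let E (x : Quotient (upSetoid U S)) (F : ∀ y, r y x → ∀ i, S i) : Set _ :=
    insert a₀ (range fun y : {y // r y x} => Quotient.mk (upSetoid U S) (F y y.2))
  have hE : ∀ x F, #(E x F) < #(Quotient (upSetoid U S)) := fun x F =>
    calc #(E x F) ≤ #{y // r y x} + 1 := mk_insert_le.trans (add_le_add_left mk_range_le 1)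
      _ < _ := add_lt_of_lt (aleph0_le_mk _) (card_typein_lt x hr)
        (one_lt_aleph0.trans_le (aleph0_le_mk _))
  -- `F x i` avoids the values at `i` of all earlier `⟦F y⟧` and of `a₀` whenever it can;
  -- `a₀` is there to make the count below strict.
  let F : Quotient (upSetoid U S) → ∀ i, S i := IsWellFounded.wf.fix fun x F i =>
    Classical.epsilon fun v => ∀ b ∈ E x F, c b i ≠ v
  let Y x := {i | ¬Surjective fun b : E x (fun y _ => F y) => c b i} ∩
    {i | c (Quotient.mk _ (F x)) i = F x i}
  refine ⟨Y, fun x => Filter.inter_mem (hsmall _ (hE x fun y _ => F y))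
    (upSetoid_mk_eq_mk_iff.1 (hc _)), fun i => ?_⟩
  have fresh : ∀ x, i ∈ Y x → ∀ b ∈ E x (fun y _ => F y), c b i ≠ F x i := by
    intro x hx
    obtain ⟨v, hv⟩ := not_forall.1 hx.1
    rw [show F x = _ from IsWellFounded.wf.fix_eq _ x]
    exact Classical.epsilon_spec (p := fun v => ∀ b ∈ E x (fun y _ => F y), c b i ≠ v)
      ⟨v, fun b hb hbv => hv ⟨⟨b, hb⟩, hbv⟩⟩
  have ne_of_rel : ∀ x y : {x // i ∈ Y x}, r x y → F x i ≠ F y i := fun x y hxy => by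
    rw [← x.2.2]
    exact fresh y y.2 _ (mem_insert_of_mem _ ⟨⟨x, hxy⟩, rfl⟩)
  refine ENat.card_lt_card_of_injective_of_notMem (f := fun x : {x // i ∈ Y x} => F x i)
    (b := c a₀ i) (fun x y hxy => ?_) ?_
  · rcases trichotomous_of r x y with h | h | h
    · exact absurd hxy (ne_of_rel x y h)
    · exact Subtype.ext h
    · exact absurd hxy.symm (ne_of_rel y x h)
  · rintro ⟨x, hx⟩
    exact fresh x x.2 a₀ (mem_insert _ _) hx.symm

theorem exists_small_surjective_mem [∀ i, Finite (S i)] [Infinite (Quotient (upSetoid U S))]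
    {c : Quotient (upSetoid U S) → ∀ i, S i} (hc : ∀ a, Quotient.mk (upSetoid U S) (c a) = a) :
    ∃ E : Set (Quotient (upSetoid U S)), #E < #(Quotient (upSetoid U S)) ∧
      {i | Surjective fun b : E => c b i} ∈ U := by
  by_contra! h
  obtain ⟨Y, hYU, hY⟩ := exists_isThinFor_of_forall_not_surjective hc fun E hE =>
    Ultrafilter.compl_mem_iff_notMem.2 (h E hE)
  obtain ⟨a, ha⟩ := hY.exists_notMem hc
  exact ha (hYU a)

def upToPi (ι : Type*) :
    Quotient (upSetoid U fun i => ι → S i) → ι → Quotient (upSetoid U S) :=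
  Quotient.lift (fun f j => Quotient.mk _ fun i => f i j) fun _ _ h =>
    funext fun j => upSetoid_mk_eq_mk_iff.2 (Filter.mem_of_superset h fun _ hi => congrFun hi j)

theorem upToPi_injective {ι : Type*} [Finite ι] : Injective (upToPi (U := U) (S := S) ι) := by
  refine fun p q => Quotient.inductionOn₂ p q fun f g h => upSetoid_mk_eq_mk_iff.2 ?_
  have hj : ∀ j, {i | f i j = g i j} ∈ U := fun j => upSetoid_mk_eq_mk_iff.1 (congrFun h j)
  exact Filter.mem_of_superset (Filter.iInter_mem.2 hj) fun i hi => funext (mem_iInter.1 hi)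

end Ultraproduct

theorem density_lt_card_kdim_general {I : Type*} (k : ℕ) (U : Ultrafilter I)
    (n : I → Type*) [∀ i, Finite (n i)]
    (hA : Infinite (Quotient (upSetoid U n)))
    (c : (Fin k → Quotient (upSetoid U n)) → ∀ i, Fin k → n i)
    (hc : ∀ a j, Quotient.mk (upSetoid U n) (fun i => c a i j) = a j) :
    ∃ D : Set (Fin k → Quotient (upSetoid U n)),
      @Dense _ (ultraTop U c) D ∧
      Cardinal.mk D < Cardinal.mk (Quotient (upSetoid U n)) := by
  rcases k.eq_zero_or_pos with rfl | hk
  · refine ⟨univ, @dense_univ _ (ultraTop U c), ?_⟩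
    rw [mk_univ, mk_eq_one]
    exact one_lt_aleph0.trans_le (infinite_iff.1 hA)
  have hsec : ∀ a, upToPi (Fin k) (Quotient.mk _ (c a)) = a := fun a => funext (hc a)
  let e := Equiv.ofBijective _ ⟨upToPi_injective, fun a => ⟨_, hsec a⟩⟩
  have hcard : #(Quotient (upSetoid U fun i => Fin k → n i)) = #(Quotient (upSetoid U n)) := by
    rw [mk_congr e, mk_arrow, mk_fin, lift_natCast, lift_id']
    exact power_nat_eq (infinite_iff.1 hA) hk
  have : Infinite (Quotient (upSetoid U fun i => Fin k → n i)) :=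
    infinite_iff.2 (hcard ▸ infinite_iff.1 hA)
  obtain ⟨E, hEcard, hE⟩ :=
    exists_small_surjective_mem (c := c ∘ e) fun q => e.injective (hsec (e q))
  refine ⟨e '' E, dense_ultraTop_of_surjective_mem <| Filter.mem_of_superset hE fun i hi v => ?_,
    ?_⟩
  · obtain ⟨⟨b, hb⟩, hbv⟩ := hi v
    exact ⟨⟨e b, mem_image_of_mem e hb⟩, hbv⟩
  · calc #(e '' E) ≤ #E := mk_image_le
      _ < _ := hEcard
      _ = _ := hcard

/-- If `A = ∏ᵢ nᵢ / U` is an infinite ultraproduct of finite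
nonempty sets and `C` is the ultratopology on `ᵏA` induced by a `k`-dimensional
choice function on `A`, then the density of `C` is strictly less than `|A|`:
there is a dense set `D ⊆ ᵏA` with `|D| < |A|`. -/
theorem density_lt_card_kdim {I : Type*} (k : ℕ) (U : Ultrafilter I)
    (n : I → Type*) [∀ i, Finite (n i)] [∀ i, Nonempty (n i)]
    (hA : Infinite (Quotient (upSetoid U n)))
    (c : (Fin k → Quotient (upSetoid U n)) → ∀ i, Fin k → n i)
    (hc : ∀ a j, Quotient.mk (upSetoid U n) (fun i => c a i j) = a j) :
    ∃ D : Set (Fin k → Quotient (upSetoid U n)),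
      @Dense _ (ultraTop U c) D ∧
      Cardinal.mk D < Cardinal.mk (Quotient (upSetoid U n)) :=
  density_lt_card_kdim_general k U n hA c hc
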